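/- Deadlock freedom from the lockset_ok invariant (abstract version): suppose at all times every thread t holding a lock ℓ satisfies: the set of locks held by other threads at the time t acquired ℓ, intersected with ℓ's future lockset, is empty, and every lock that t subsequently requests while holding ℓ belongs to ℓ's future lockset, and the future lockset only shrinks over time while locks held by others at acquisition time only come from the store existing at acquisition time. Then no cyclic deadlock among k ≥ 2 threads is possible. -/

import Mathlib

/-!
Let `m` be the thread of the cycle whose lock was acquired last, and `p` the thread holding the
lock `ℓ m` that `t m` requests; then `t p` already held `ℓ m` when `t m` acquired its lock. Since `t m`
later requests `ℓ m`, invariant I2 puts `ℓ m` into the future lockset `F m`, and invariant I1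
says that no other thread held a lock of `F m` at time `a m`: contradiction.
-/

theorem not_lock_cycle_of_lockset_invariant {ι T L : Type*} [Finite ι] [Nonempty ι]
    (held : ℕ → T → L → Prop) (next : ι → ι) (hnext : Function.Surjective next)
    (hnext_ne : ∀ i, next i ≠ i) (t : ι → T) (ht : Function.Injective t)
    (ℓ : ι → L) (F : ι → Set L) (a : ι → ℕ) (τ : ℕ) (hτ : ∀ i, a i < τ)
    (hheld : ∀ i j, a i ≤ j → j ≤ τ → held j (t i) (ℓ (next i)))
    (hI1 : ∀ i, ∀ t', t' ≠ t i → ∀ x ∈ F i, ¬ held (a i) t' x)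
    (hI2 : ∀ i, ℓ i ∈ F i) :
    False := by
  obtain ⟨m, hm⟩ := Finite.exists_max a
  obtain ⟨p, rfl⟩ := hnext m
  have hp_holds : held (a (next p)) (t p) (ℓ (next p)) :=
    hheld p _ (hm p) (hτ _).le
  exact hI1 (next p) (t p) (fun h => hnext_ne p (ht h).symm) _ (hI2 _) hp_holds

theorem stmt_17_general {T L : Type*}
    (held : ℕ → T → L → Prop)
    (k : ℕ)  -- number of threads is k + 2 ≥ 2
    (t : Fin (k + 2) → T) (ht : Function.Injective t)
    (ℓ : Fin (k + 2) → L) (F : Fin (k + 2) → Set L)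
    (a : Fin (k + 2) → ℕ)
    (τ : ℕ) (hτ : ∀ i, a i < τ)
    (hheld : ∀ i : Fin (k + 2), ∀ j, a i ≤ j → j ≤ τ → held j (t i) (ℓ (i + 1)))
    (hI1 : ∀ i : Fin (k + 2), ∀ t', t' ≠ t i → ∀ x ∈ F i ∪ {ℓ (i + 1)}, ¬ held (a i) t' x)
    (hI2 : ∀ i : Fin (k + 2), ℓ i ∈ F i) :
    False :=
  not_lock_cycle_of_lockset_invariant held (· + 1) (add_right_surjective 1) (by simp) t ht ℓ F a
    τ hτ hheld (fun i t' ht' x hx => hI1 i t' ht' x (Or.inl hx)) hI2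

/-- Deadlock freedom from the `lockset_ok` invariant (abstract version).
Threads `t 0, …, t (k-1)` (k ≥ 2, distinct) form a putative deadlock cycle at
time τ: thread `t i` holds lock `ℓ (i+1)` continuously since its acquisition
time `a i < τ` (timestamps all distinct) and requests lock `ℓ i` at τ.
Invariant I1: at time `a i`, no other thread held any lock in
`F i ∪ {ℓ (i+1)}`, where `F i` is the future lockset recorded at that
acquisition. Invariant I2: every lock requested by `t i` while still holding
`ℓ (i+1)` is in `F i`; in particular `ℓ i ∈ F i`. Then no such cycle exists. -/
theorem stmt_17 {T L : Type*}
    (held : ℕ → T → L → Prop)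
    (k : ℕ)  -- number of threads is k + 2 ≥ 2
    (t : Fin (k + 2) → T) (ht : Function.Injective t)
    (ℓ : Fin (k + 2) → L) (F : Fin (k + 2) → Set L)
    (a : Fin (k + 2) → ℕ) (ha : Function.Injective a)
    (τ : ℕ) (hτ : ∀ i, a i < τ)
    (hheld : ∀ i : Fin (k + 2), ∀ j, a i ≤ j → j ≤ τ → held j (t i) (ℓ (i + 1)))
    (hI1 : ∀ i : Fin (k + 2), ∀ t', t' ≠ t i → ∀ x ∈ F i ∪ {ℓ (i + 1)}, ¬ held (a i) t' x)
    (hI2 : ∀ i : Fin (k + 2), ℓ i ∈ F i) :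
    False :=
  stmt_17_general held k t ht ℓ F a τ hτ hheld hI1 hI2
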